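/- arXiv:math/0511323 — 2 statements merged into one kernel-verified Lean document; each statement's English description precedes it below -/
import Mathlib

section
/- Let q be a real number with 0<q<1, let r and f be positive integers, let χ be a Dirichlet character modulo f with values in ℂ, let x>0 be real, let w₁,…,w_r be positive reals, and let s∈ℂ. Then (∏_{j=1}^r w_j)·Σ_{(n₁,…,n_r)∈(ℤ_{≥1})^r} (∏_{k=1}^r χ(n_k))·q^{x+Σ_{m=1}^r w_m n_m}·[x+Σ_{m=1}^r w_m n_m]_q^{-s} = [f]_q^{-s}·Σ_{(a₁,…,a_r)∈{1,…,f}^r} (∏_{k=1}^r χ(a_k))·(∏_{j=1}^r w_j)·Σ_{(k₁,…,k_r)∈ℕ^r} (q^f)^{(x+Σ_{j=1}^r w_j a_j)/f + Σ_{j=1}^r k_j w_j}·[ (x+Σ_{j=1}^r w_j a_j)/f + Σ_{j=1}^r k_j w_j ]_{q^f}^{-s}, all series converging absolutely. (Theorem 3: the two-variable Dirichlet-type multiple Changhee q-L-function decomposes into Barnes-type multiple Changhee q-zeta series with base q^f.) -/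
/-!
Write `ν_m + 1 = f κ_m + a_m` with `1 ≤ a_m ≤ f`. Since `χ` has period `f`, `χ(ν_m + 1) = χ(a_m)`,
and the exponent `x + ∑ w_m (ν_m + 1)` equals `f t` with `t = (x + ∑ w_m a_m)/f + ∑ κ_m w_m`.
Then `q^{f t} = (q^f)^t` and `[f t]_q = [f]_q [t]_{q^f}` factor every term of the `L`-series
through base `q^f`. All series converge absolutely because `[·]_q` stays between `[x]_q` and
`1/(1 - q)` on `[x, ∞)`, so the terms are dominated by the geometric product `∏ (q^{w_m})^{κ_m}`.
-/

open Complex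

/-- The `q`-number `[y]_q = (1 - q^y)/(1 - q)`, where `q^y` is the real power. -/
noncomputable def qNum (q y : ℝ) : ℝ := (1 - q ^ y) / (1 - q)

section qNum

variable {q : ℝ}

lemma qNum_pos (hq0 : 0 < q) (hq1 : q < 1) {t : ℝ} (ht : 0 < t) : 0 < qNum q t :=
  div_pos (sub_pos.mpr (Real.rpow_lt_one hq0.le hq1 ht)) (sub_pos.mpr hq1)

lemma qNum_le_inv_one_sub (hq0 : 0 < q) (hq1 : q < 1) (t : ℝ) : qNum q t ≤ (1 - q)⁻¹ := by
  have hq : 0 < 1 - q := sub_pos.mpr hq1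
  rw [qNum, div_le_iff₀ hq, inv_mul_cancel₀ hq.ne']
  linarith [Real.rpow_pos_of_pos hq0 t]

lemma qNum_monotone (hq0 : 0 < q) (hq1 : q < 1) : Monotone (qNum q) := fun t u htu => by
  have : q ^ u ≤ q ^ t := Real.rpow_le_rpow_of_exponent_ge hq0 hq1.le htu
  unfold qNum
  gcongr

lemma qNum_natCast_mul (hq0 : 0 ≤ q) (hq1 : q ≠ 1) {n : ℕ} (hqn : q ^ n ≠ 1) (t : ℝ) :
    qNum q (n * t) = qNum q n * qNum (q ^ n) t := by
  have h1 : 1 - q ≠ 0 := sub_ne_zero.mpr hq1.symm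
  have h2 : 1 - q ^ n ≠ 0 := sub_ne_zero.mpr hqn.symm
  unfold qNum
  rw [Real.rpow_mul hq0, Real.rpow_natCast]
  field_simp

end qNum

lemma rpow_le_max_of_mem_Icc {a b u : ℝ} (e : ℝ) (ha : 0 < a) (hau : a ≤ u) (hub : u ≤ b) :
    u ^ e ≤ max (a ^ e) (b ^ e) := by
  rcases le_or_gt 0 e with he | he
  · exact le_max_of_le_right (Real.rpow_le_rpow (ha.le.trans hau) hub he)
  · exact le_max_of_le_left (Real.rpow_le_rpow_of_nonpos ha hau he.le)

lemma summable_fin_pi_prod {n : ℕ} (g : Fin n → ℕ → ℝ) (hg0 : ∀ m k, 0 ≤ g m k)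
    (hg : ∀ m, Summable (g m)) : Summable fun ν : Fin n → ℕ => ∏ m, g m (ν m) := by
  induction n with
  | zero => exact Summable.of_finite
  | succ n ih =>
    have hcons := (hg 0).mul_of_nonneg (ih (fun m => g m.succ) (fun _ _ => hg0 _ _) fun _ => hg _)
      (hg0 0) fun _ => Finset.prod_nonneg fun _ _ => hg0 _ _
    refine ((Fin.consEquiv fun _ : Fin (n + 1) => ℕ).symm.summable_iff.mpr hcons).congr
      fun ν => ?_
    simp [Fin.consEquiv, Fin.prod_univ_succ, Fin.tail]

noncomputable def qZetaTerm (q t : ℝ) (s : ℂ) : ℂ := ((q ^ t : ℝ) : ℂ) * ((qNum q t : ℝ) : ℂ) ^ (-s)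

section qZetaTerm

variable {q : ℝ}

lemma norm_qZetaTerm (hq0 : 0 < q) (hq1 : q < 1) {t : ℝ} (ht : 0 < t) (s : ℂ) :
    ‖qZetaTerm q t s‖ = q ^ t * qNum q t ^ (-s.re) := by
  rw [qZetaTerm, norm_mul, norm_real, Real.norm_of_nonneg (Real.rpow_pos_of_pos hq0 t).le,
    norm_cpow_eq_rpow_re_of_pos (qNum_pos hq0 hq1 ht), neg_re]

lemma qZetaTerm_natCast_mul (hq0 : 0 < q) (hq1 : q < 1) {n : ℕ} (hn : n ≠ 0) {t : ℝ}
    (ht : 0 < t) (s : ℂ) :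
    qZetaTerm q (n * t) s = ((qNum q n : ℝ) : ℂ) ^ (-s) * qZetaTerm (q ^ n) t s := by
  have hqn : q ^ n < 1 := pow_lt_one₀ hq0.le hq1 hn
  have hn' : (0 : ℝ) < n := Nat.cast_pos.mpr (Nat.pos_of_ne_zero hn)
  rw [qZetaTerm, qZetaTerm, qNum_natCast_mul hq0.le hq1.ne hqn.ne, Real.rpow_mul hq0.le,
    Real.rpow_natCast, ofReal_mul, mul_cpow_ofReal_nonneg (qNum_pos hq0 hq1 hn').le
      (qNum_pos (pow_pos hq0 n) hqn ht).le]
  ring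

lemma summable_qZetaTerm (hq0 : 0 < q) (hq1 : q < 1) {r : ℕ} {x : ℝ} (hx : 0 < x)
    {w : Fin r → ℝ} (hw : ∀ j, 0 < w j) (s : ℂ) :
    Summable fun κ : Fin r → ℕ => qZetaTerm q (x + ∑ j, (κ j : ℝ) * w j) s := by
  have hsum : ∀ κ : Fin r → ℕ, 0 ≤ ∑ j, (κ j : ℝ) * w j := fun κ =>
    Finset.sum_nonneg fun j _ => mul_nonneg (Nat.cast_nonneg _) (hw j).le
  have hpos : ∀ κ : Fin r → ℕ, 0 < x + ∑ j, (κ j : ℝ) * w j := fun κ =>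
    add_pos_of_pos_of_nonneg hx (hsum κ)
  set C := max (qNum q x ^ (-s.re)) ((1 - q)⁻¹ ^ (-s.re))
  have hgeom : Summable fun κ : Fin r → ℕ => q ^ x * C * ∏ j, (q ^ w j) ^ κ j :=
    (summable_fin_pi_prod (fun j k => (q ^ w j) ^ k)
      (fun j k => pow_nonneg (Real.rpow_pos_of_pos hq0 _).le k)
      fun j => summable_geometric_of_lt_one (Real.rpow_pos_of_pos hq0 _).le
        (Real.rpow_lt_one hq0.le hq1 (hw j))).mul_left _
  refine Summable.of_norm_bounded hgeom fun κ => ?_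
  have hexp : q ^ (x + ∑ j, (κ j : ℝ) * w j) = q ^ x * ∏ j, (q ^ w j) ^ κ j := by
    rw [Real.rpow_add hq0, Real.rpow_sum_of_pos hq0]
    congr 1
    refine Finset.prod_congr rfl fun j _ => ?_
    rw [mul_comm, Real.rpow_mul hq0.le, Real.rpow_natCast]
  have hC : qNum q (x + ∑ j, (κ j : ℝ) * w j) ^ (-s.re) ≤ C :=
    rpow_le_max_of_mem_Icc _ (qNum_pos hq0 hq1 hx)
      (qNum_monotone hq0 hq1 (le_add_of_nonneg_right (hsum κ))) (qNum_le_inv_one_sub hq0 hq1 _)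
  rw [norm_qZetaTerm hq0 hq1 (hpos κ), hexp, mul_right_comm]
  gcongr

end qZetaTerm

theorem tsum_pi_nat_eq_sum_tsum {ι E : Type*} [Fintype ι] [DecidableEq ι] [NormedAddCommGroup E]
    [CompleteSpace E] {f : ℕ} [NeZero f] {g : (ι → ℕ) → E} (hg : Summable g) :
    ∑' ν, g ν = ∑ b : ι → Fin f, ∑' κ : ι → ℕ, g fun m => κ m * f + b m := by
  let e : (ι → Fin f) × (ι → ℕ) ≃ (ι → ℕ) :=
    (((Equiv.piCongrRight fun _ : ι => Nat.divModEquiv f).trans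
      (Equiv.arrowProdEquivProdArrow ι (fun _ => ℕ) (fun _ => Fin f))).trans
      (Equiv.prodComm _ _)).symm
  rw [← e.tsum_eq]
  exact (e.summable_iff.mpr hg).tsum_prod.trans (tsum_fintype _)

lemma sum_piFinset_Icc_one {ι M : Type*} [Fintype ι] [DecidableEq ι] [AddCommMonoid M]
    {f : ℕ} (hf : 0 < f) (g : (ι → ℕ) → M) :
    ∑ a ∈ Fintype.piFinset (fun _ : ι => Finset.Icc 1 f), g a
      = ∑ b : ι → Fin f, g fun j => (b j : ℕ) + 1 := by
  symm
  refine Finset.sum_nbij' (fun b j => (b j : ℕ) + 1)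
    (fun a j => ⟨(a j - 1) % f, Nat.mod_lt _ hf⟩) ?_ ?_ ?_ ?_ fun _ _ => rfl
  · intro b _
    simp
  · exact fun _ _ => Finset.mem_univ _
  · intro b _
    funext j
    ext
    simpa using Nat.mod_eq_of_lt (b j).is_lt
  · intro a ha
    simp only [Fintype.mem_piFinset, Finset.mem_Icc] at ha
    funext j
    have := ha j
    simp only [Nat.mod_eq_of_lt (show a j - 1 < f by omega)]
    omega

section Dirichlet

variable {q : ℝ} {r f : ℕ} (χ : DirichletCharacter ℂ f) {x : ℝ} {w : Fin r → ℝ}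

lemma summable_prod_dirichlet_mul_qZetaTerm (hq0 : 0 < q) (hq1 : q < 1) (hx : 0 < x)
    (hw : ∀ j, 0 < w j) (s : ℂ) :
    Summable fun ν : Fin r → ℕ =>
      (∏ k, χ ((ν k + 1 : ℕ) : ZMod f)) * qZetaTerm q (x + ∑ m, w m * ((ν m : ℝ) + 1)) s := by
  have hx' : 0 < x + ∑ m, w m :=
    add_pos_of_pos_of_nonneg hx (Finset.sum_nonneg fun m _ => (hw m).le)
  refine Summable.of_norm_bounded (summable_qZetaTerm hq0 hq1 hx' hw s).norm fun ν => ?_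
  have hshift : x + ∑ m, w m * ((ν m : ℝ) + 1) = x + ∑ m, w m + ∑ m, (ν m : ℝ) * w m := by
    rw [Finset.sum_congr rfl fun m _ => show w m * ((ν m : ℝ) + 1) = ν m * w m + w m by ring,
      Finset.sum_add_distrib]
    ring
  rw [norm_mul, hshift, norm_prod]
  exact mul_le_of_le_one_left (norm_nonneg _)
    (Finset.prod_le_one (fun _ _ => norm_nonneg _) fun _ _ => χ.norm_le_one _)

lemma prod_dirichlet_mul_qZetaTerm_mul_add (hq0 : 0 < q) (hq1 : q < 1) (hf : 0 < f) (hx : 0 < x)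
    (hw : ∀ j, 0 < w j) (s : ℂ) (b κ : Fin r → ℕ) :
    (∏ k, χ ((κ k * f + b k + 1 : ℕ) : ZMod f)) *
        qZetaTerm q (x + ∑ m, w m * (((κ m * f + b m : ℕ) : ℝ) + 1)) s
      = ((qNum q f : ℝ) : ℂ) ^ (-s) * (∏ k, χ ((b k + 1 : ℕ) : ZMod f)) *
        qZetaTerm (q ^ f) ((x + ∑ j, w j * ((b j + 1 : ℕ) : ℝ)) / f + ∑ j, (κ j : ℝ) * w j) s := by
  have hfR : (0 : ℝ) < f := Nat.cast_pos.mpr hf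
  have hχ : ∀ k, ((κ k * f + b k + 1 : ℕ) : ZMod f) = ((b k + 1 : ℕ) : ZMod f) := fun k => by
    push_cast [ZMod.natCast_self]
    ring
  have ht : 0 < (x + ∑ j, w j * ((b j + 1 : ℕ) : ℝ)) / f + ∑ j, (κ j : ℝ) * w j := by
    have hb : 0 ≤ ∑ j, w j * ((b j + 1 : ℕ) : ℝ) :=
      Finset.sum_nonneg fun j _ => mul_nonneg (hw j).le (Nat.cast_nonneg _)
    have hκ : 0 ≤ ∑ j, (κ j : ℝ) * w j :=
      Finset.sum_nonneg fun j _ => mul_nonneg (Nat.cast_nonneg _) (hw j).le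
    positivity
  have hT : x + ∑ m, w m * (((κ m * f + b m : ℕ) : ℝ) + 1)
      = f * ((x + ∑ j, w j * ((b j + 1 : ℕ) : ℝ)) / f + ∑ j, (κ j : ℝ) * w j) := by
    rw [mul_add, mul_div_cancel₀ _ hfR.ne', Finset.mul_sum, add_assoc, ← Finset.sum_add_distrib]
    congr 1
    refine Finset.sum_congr rfl fun m _ => ?_
    push_cast
    ring
  rw [Finset.prod_congr rfl fun k _ => congrArg χ (hχ k), hT,
    qZetaTerm_natCast_mul hq0 hq1 hf.ne' ht]
  ring

end Dirichlet

theorem stmt3_general (q : ℝ) (hq0 : 0 < q) (hq1 : q < 1) (r f : ℕ) (hf : 0 < f)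
    (χ : DirichletCharacter ℂ f) (x : ℝ) (hx : 0 < x) (w : Fin r → ℝ) (hw : ∀ j, 0 < w j)
    (s : ℂ) :
    Summable (fun ν : Fin r → ℕ => (∏ k, χ ((ν k + 1 : ℕ) : ZMod f)) *
        ((q ^ (x + ∑ m, w m * ((ν m : ℝ) + 1)) : ℝ) : ℂ) *
        ((qNum q (x + ∑ m, w m * ((ν m : ℝ) + 1)) : ℝ) : ℂ) ^ (-s)) ∧
    (∀ a : Fin r → ℕ, Summable (fun κ : Fin r → ℕ =>
        (((q ^ f) ^ ((x + ∑ j, w j * (a j : ℝ)) / (f : ℝ) + ∑ j, (κ j : ℝ) * w j) : ℝ) : ℂ) *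
        ((qNum (q ^ f) ((x + ∑ j, w j * (a j : ℝ)) / (f : ℝ) + ∑ j, (κ j : ℝ) * w j) : ℝ) : ℂ)
          ^ (-s))) ∧
    (∏ j, ((w j : ℝ) : ℂ)) * ∑' ν : Fin r → ℕ, (∏ k, χ ((ν k + 1 : ℕ) : ZMod f)) *
        ((q ^ (x + ∑ m, w m * ((ν m : ℝ) + 1)) : ℝ) : ℂ) *
        ((qNum q (x + ∑ m, w m * ((ν m : ℝ) + 1)) : ℝ) : ℂ) ^ (-s)
      = ((qNum q (f : ℝ) : ℝ) : ℂ) ^ (-s) *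
        ∑ a ∈ Fintype.piFinset (fun _ : Fin r => Finset.Icc 1 f),
          (∏ k, χ ((a k : ℕ) : ZMod f)) * ((∏ j, ((w j : ℝ) : ℂ)) *
            ∑' κ : Fin r → ℕ,
              (((q ^ f) ^ ((x + ∑ j, w j * (a j : ℝ)) / (f : ℝ) + ∑ j, (κ j : ℝ) * w j) : ℝ) : ℂ) *
              ((qNum (q ^ f) ((x + ∑ j, w j * (a j : ℝ)) / (f : ℝ) + ∑ j, (κ j : ℝ) * w j) : ℝ) : ℂ)
                ^ (-s)) := by
  have : NeZero f := ⟨hf.ne'⟩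
  have hL := summable_prod_dirichlet_mul_qZetaTerm χ hq0 hq1 hx hw s
  simp only [qZetaTerm, ← mul_assoc] at hL
  have hx' : ∀ a : Fin r → ℕ, 0 < (x + ∑ j, w j * (a j : ℝ)) / f := fun a =>
    div_pos (add_pos_of_pos_of_nonneg hx (Finset.sum_nonneg fun j _ =>
      mul_nonneg (hw j).le (Nat.cast_nonneg _))) (Nat.cast_pos.mpr hf)
  refine ⟨hL, fun a => summable_qZetaTerm (pow_pos hq0 f) (pow_lt_one₀ hq0.le hq1 hf.ne')
    (hx' a) hw s, ?_⟩
  rw [tsum_pi_nat_eq_sum_tsum (f := f) hL, sum_piFinset_Icc_one hf, Finset.mul_sum, Finset.mul_sum]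
  refine Finset.sum_congr rfl fun b _ => ?_
  simp only [← tsum_mul_left]
  refine tsum_congr fun κ => ?_
  have key := prod_dirichlet_mul_qZetaTerm_mul_add χ hq0 hq1 hf hx hw s (fun m => b m) κ
  simp only [qZetaTerm] at key
  linear_combination (∏ j, ((w j : ℝ) : ℂ)) * key

/-- Theorem 3: the two-variable Dirichlet-type multiple Changhee `q`-`L`-function decomposes into
Barnes-type multiple Changhee `q`-zeta series with base `q^f`. -/
theorem stmt3 (q : ℝ) (hq0 : 0 < q) (hq1 : q < 1) (r f : ℕ) (hr : 0 < r) (hf : 0 < f)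
    (χ : DirichletCharacter ℂ f) (x : ℝ) (hx : 0 < x) (w : Fin r → ℝ) (hw : ∀ j, 0 < w j)
    (s : ℂ) :
    Summable (fun ν : Fin r → ℕ => (∏ k, χ ((ν k + 1 : ℕ) : ZMod f)) *
        ((q ^ (x + ∑ m, w m * ((ν m : ℝ) + 1)) : ℝ) : ℂ) *
        ((qNum q (x + ∑ m, w m * ((ν m : ℝ) + 1)) : ℝ) : ℂ) ^ (-s)) ∧
    (∀ a : Fin r → ℕ, Summable (fun κ : Fin r → ℕ =>
        (((q ^ f) ^ ((x + ∑ j, w j * (a j : ℝ)) / (f : ℝ) + ∑ j, (κ j : ℝ) * w j) : ℝ) : ℂ) *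
        ((qNum (q ^ f) ((x + ∑ j, w j * (a j : ℝ)) / (f : ℝ) + ∑ j, (κ j : ℝ) * w j) : ℝ) : ℂ)
          ^ (-s))) ∧
    (∏ j, ((w j : ℝ) : ℂ)) * ∑' ν : Fin r → ℕ, (∏ k, χ ((ν k + 1 : ℕ) : ZMod f)) *
        ((q ^ (x + ∑ m, w m * ((ν m : ℝ) + 1)) : ℝ) : ℂ) *
        ((qNum q (x + ∑ m, w m * ((ν m : ℝ) + 1)) : ℝ) : ℂ) ^ (-s)
      = ((qNum q (f : ℝ) : ℝ) : ℂ) ^ (-s) *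
        ∑ a ∈ Fintype.piFinset (fun _ : Fin r => Finset.Icc 1 f),
          (∏ k, χ ((a k : ℕ) : ZMod f)) * ((∏ j, ((w j : ℝ) : ℂ)) *
            ∑' κ : Fin r → ℕ,
              (((q ^ f) ^ ((x + ∑ j, w j * (a j : ℝ)) / (f : ℝ) + ∑ j, (κ j : ℝ) * w j) : ℝ) : ℂ) *
              ((qNum (q ^ f) ((x + ∑ j, w j * (a j : ℝ)) / (f : ℝ) + ∑ j, (κ j : ℝ) * w j) : ℝ) : ℂ)
                ^ (-s)) :=
  stmt3_general q hq0 hq1 r f hf χ x hx w hw s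
end

section
/- Let q be a real number with 0<q<1, let f be a positive integer, let χ be a Dirichlet character modulo f with values in ℂ, and let x>0 be real. Then for every t∈ℂ, Σ_{n=1}^∞ χ(n)·q^{n+x}·exp([n+x]_q·t) = q^x·exp([x]_q·t)·Σ_{a=1}^{f} χ(a)·Σ_{k=0}^∞ q^{fk+a}·exp([fk+a]_q·q^x·t), both series converging absolutely. (The distribution decomposition of the generating function F_{q,χ}(x,t) of the generalized q-Bernoulli polynomials, obtained from the identity [n+x]_q = [x]_q + q^x·[n]_q.) -/
/-!
Since `[x + y]_q = [x]_q + q^x [y]_q`, each summand factors as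
`q^(x+y) e^([x+y]_q t) = q^x e^([x]_q t) · q^y e^([y]_q q^x t)`. Pulling out the common factor and
splitting `n ≥ 1` into the residue classes `n = f k + a` with `1 ≤ a ≤ f`, on which `χ` is constant,
gives the identity. All series converge absolutely because `|[y]_q| ≤ 1/(1-q)` for `y ≥ 0`, so the
summands are dominated by a multiple of `q^n`.
-/

open Complex

/-- The summand `q^y e^([y]_q s)` of the generating function `F_{q,χ}`. -/
noncomputable def qExpTerm (q : ℝ) (s : ℂ) (y : ℝ) : ℂ :=
  ((q ^ y : ℝ) : ℂ) * exp (((qNum q y : ℝ) : ℂ) * s)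

section qNum

variable {q : ℝ}

lemma qNum_add (hq0 : 0 < q) (hq1 : q ≠ 1) (x y : ℝ) :
    qNum q (x + y) = qNum q x + q ^ x * qNum q y := by
  have h1q : 1 - q ≠ 0 := sub_ne_zero.mpr hq1.symm
  unfold qNum
  rw [Real.rpow_add hq0]
  field_simp
  ring

lemma abs_qNum_le (hq0 : 0 < q) (hq1 : q < 1) {y : ℝ} (hy : 0 ≤ y) :
    |qNum q y| ≤ 1 / (1 - q) := by
  have h1q : 0 < 1 - q := by linarith
  have hpos : 0 < q ^ y := Real.rpow_pos_of_pos hq0 y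
  have hle : q ^ y ≤ 1 := Real.rpow_le_one hq0.le hq1.le hy
  rw [qNum, abs_div, abs_of_pos h1q, abs_of_nonneg (by linarith)]
  gcongr
  linarith

lemma qExpTerm_add (hq0 : 0 < q) (hq1 : q ≠ 1) (t : ℂ) (x y : ℝ) :
    qExpTerm q t (x + y) = qExpTerm q t x * qExpTerm q ((q ^ x : ℝ) * t) y := by
  simp only [qExpTerm, qNum_add hq0 hq1, Real.rpow_add hq0]
  push_cast
  rw [add_mul, exp_add]
  ring_nf

lemma norm_qExpTerm_le (hq0 : 0 < q) (hq1 : q < 1) (s : ℂ) {y : ℝ} (hy : 0 ≤ y) :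
    ‖qExpTerm q s y‖ ≤ Real.exp (‖s‖ / (1 - q)) * q ^ y := by
  have hexp : ‖exp (((qNum q y : ℝ) : ℂ) * s)‖ ≤ Real.exp (‖s‖ / (1 - q)) := by
    rw [norm_exp, re_ofReal_mul, Real.exp_le_exp]
    calc qNum q y * s.re ≤ |qNum q y| * |s.re| := (le_abs_self _).trans (abs_mul _ _).le
      _ ≤ 1 / (1 - q) * ‖s‖ := by
        gcongr
        exacts [abs_qNum_le hq0 hq1 hy, abs_re_le_norm s]
      _ = ‖s‖ / (1 - q) := by ring
  rw [qExpTerm, norm_mul, norm_real, Real.norm_of_nonneg (Real.rpow_nonneg hq0.le y), mul_comm]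
  gcongr

lemma summable_mul_qExpTerm (hq0 : 0 < q) (hq1 : q < 1) (s : ℂ) {c : ℕ → ℂ} {C : ℝ}
    (hc : ∀ n, ‖c n‖ ≤ C) {e : ℕ → ℝ} (he : ∀ n : ℕ, (n : ℝ) ≤ e n) :
    Summable fun n => c n * qExpTerm q s (e n) := by
  refine Summable.of_norm_bounded
    ((summable_geometric_of_lt_one hq0.le hq1).mul_left (C * Real.exp (‖s‖ / (1 - q)))) fun n => ?_
  have he0 : 0 ≤ e n := (Nat.cast_nonneg n).trans (he n)
  have hqe : q ^ e n ≤ q ^ n := by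
    rw [← Real.rpow_natCast]
    exact Real.rpow_le_rpow_of_exponent_ge hq0 hq1.le (he n)
  calc ‖c n * qExpTerm q s (e n)‖ ≤ C * (Real.exp (‖s‖ / (1 - q)) * q ^ e n) := by
        rw [norm_mul]
        exact mul_le_mul (hc n) (norm_qExpTerm_le hq0 hq1 s he0) (norm_nonneg _)
          ((norm_nonneg _).trans (hc 0))
    _ ≤ C * Real.exp (‖s‖ / (1 - q)) * q ^ n := by
        rw [mul_assoc]
        gcongr
        exact (norm_nonneg _).trans (hc 0)

end qNum

lemma Nat.tsum_eq_sum_range_tsum_mul_add {R : Type*} [AddCommGroup R] [UniformSpace R]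
    [IsUniformAddGroup R] [CompleteSpace R] [T0Space R] {g : ℕ → R} (hg : Summable g)
    {N : ℕ} (hN : 0 < N) :
    ∑' n, g n = ∑ a ∈ Finset.range N, ∑' k, g (N * k + a) := by
  have : NeZero N := ⟨hN.ne'⟩
  rw [Nat.sumByResidueClasses hg N]
  refine Finset.sum_nbij' ZMod.val (fun a => (a : ZMod N)) (fun j _ => ?_) (fun _ _ => by simp)
    (fun j _ => ZMod.natCast_zmod_val j) (fun a ha => ZMod.val_cast_of_lt (by simpa using ha))
    (fun j _ => by simp only [add_comm])
  simpa using ZMod.val_lt j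

lemma tsum_succ_periodic_mul_eq_sum_Icc {𝕜 : Type*} [NormedField 𝕜] [CompleteSpace 𝕜]
    {c g : ℕ → 𝕜} {N : ℕ} (hN : 0 < N)
    (hc : Function.Periodic c N) (hcg : Summable fun n => c (n + 1) * g (n + 1)) :
    ∑' n, c (n + 1) * g (n + 1) = ∑ a ∈ Finset.Icc 1 N, c a * ∑' k, g (N * k + a) := by
  have hshift := Finset.sum_Ico_add' (fun a => c a * ∑' k, g (N * k + a)) 0 N 1
  rw [zero_add, Finset.Ico_add_one_right_eq_Icc, ← Finset.range_eq_Ico] at hshift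
  rw [Nat.tsum_eq_sum_range_tsum_mul_add hcg hN, ← hshift]
  refine Finset.sum_congr rfl fun a _ => ?_
  rw [← tsum_mul_left]
  refine tsum_congr fun k => ?_
  rw [add_assoc, add_comm (N * k)]
  congr 1
  simpa [mul_comm] using hc.nat_mul k (a + 1)

/-- The distribution decomposition of the generating function `F_{q,χ}(x,t)` of the generalized
`q`-Bernoulli polynomials, obtained from the identity `[n+x]_q = [x]_q + q^x·[n]_q`. -/
theorem stmt10 (q : ℝ) (hq0 : 0 < q) (hq1 : q < 1) (f : ℕ) (hf : 0 < f)
    (χ : DirichletCharacter ℂ f) (x : ℝ) (hx : 0 < x) (t : ℂ) :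
    Summable (fun n : ℕ => χ ((n + 1 : ℕ) : ZMod f) * ((q ^ (((n : ℝ) + 1) + x) : ℝ) : ℂ) *
        Complex.exp (((qNum q (((n : ℝ) + 1) + x) : ℝ) : ℂ) * t)) ∧
    (∀ a : ℕ, Summable (fun k : ℕ => ((q ^ ((f : ℝ) * (k : ℝ) + (a : ℝ)) : ℝ) : ℂ) *
        Complex.exp (((qNum q ((f : ℝ) * (k : ℝ) + (a : ℝ)) : ℝ) : ℂ) *
          ((q ^ x : ℝ) : ℂ) * t))) ∧
    ∑' n : ℕ, χ ((n + 1 : ℕ) : ZMod f) * ((q ^ (((n : ℝ) + 1) + x) : ℝ) : ℂ) *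
        Complex.exp (((qNum q (((n : ℝ) + 1) + x) : ℝ) : ℂ) * t)
      = ((q ^ x : ℝ) : ℂ) * Complex.exp (((qNum q x : ℝ) : ℂ) * t) *
        ∑ a ∈ Finset.Icc 1 f, χ ((a : ℕ) : ZMod f) *
          ∑' k : ℕ, ((q ^ ((f : ℝ) * (k : ℝ) + (a : ℝ)) : ℝ) : ℂ) *
            Complex.exp (((qNum q ((f : ℝ) * (k : ℝ) + (a : ℝ)) : ℝ) : ℂ) *
              ((q ^ x : ℝ) : ℂ) * t) := by
  set s : ℂ := ((q ^ x : ℝ) : ℂ) * t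
  have hχ : ∀ n, ‖χ n‖ ≤ 1 := χ.norm_le_one
  have hf1 : (1 : ℝ) ≤ f := by exact_mod_cast hf
  refine ⟨?_, fun a => ?_, ?_⟩
  · simpa only [qExpTerm, mul_assoc] using
      summable_mul_qExpTerm hq0 hq1 t (fun n => hχ _) (e := fun n : ℕ => (n + 1) + x)
        fun n => by linarith
  · simpa only [qExpTerm, mul_assoc, one_mul] using
      summable_mul_qExpTerm hq0 hq1 s (c := fun _ => 1) (C := 1) (fun _ => norm_one.le)
        (e := fun k : ℕ => f * k + a)
        fun k => le_add_of_le_of_nonneg (le_mul_of_one_le_left k.cast_nonneg hf1) a.cast_nonneg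
  have hsum : Summable fun n : ℕ => χ ((n + 1 : ℕ) : ZMod f) * qExpTerm q s ((n + 1 : ℕ) : ℝ) :=
    summable_mul_qExpTerm hq0 hq1 s (fun n => hχ _) fun n => by push_cast; linarith
  have hsplit := tsum_succ_periodic_mul_eq_sum_Icc (c := fun n : ℕ => χ n)
    (g := fun n : ℕ => qExpTerm q s n) hf (fun n => by simp) hsum
  calc _ = ∑' n : ℕ, qExpTerm q t x *
        (χ ((n + 1 : ℕ) : ZMod f) * qExpTerm q s ((n + 1 : ℕ) : ℝ)) := by
        refine tsum_congr fun n => ?_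
        rw [mul_left_comm, ← qExpTerm_add hq0 hq1.ne, add_comm x, qExpTerm, mul_assoc]
        push_cast
        rfl
    _ = qExpTerm q t x *
        ∑ a ∈ Finset.Icc 1 f, χ a * ∑' k, qExpTerm q s ((f * k + a : ℕ) : ℝ) := by
        rw [tsum_mul_left, hsplit]
    _ = _ := by simp only [qExpTerm, s, Nat.cast_add, Nat.cast_mul, mul_assoc]
end
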